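/- arXiv:1801.07784 — 3 statements merged into one kernel-verified Lean document; each statement's English description precedes it below -/
import Mathlib

section
/- For every t > 0, the x-derivative of ψ at the boundary point x = 0 satisfies the Robin-type relation ∂_x ψ(t,0) = −β·ψ(t,0). -/
/-! The exponent `β²σ²t/2` of the correction term is exactly `b²` for the shift
`b = βσ√t/√2` of its error function, so `exp (b²) · erf' (-b) = erf' 0`: the two Gaussian
terms in `∂ₓψ(t,0)` cancel, and only the derivative `-β` of the exponential survives. -/

open Real

theorem hasDerivAt_of_eq_integral_exp_neg_sq {erf : ℝ → ℝ}
    (herf : ∀ x : ℝ, erf x = (2 / √π) * ∫ y in (0:ℝ)..x, exp (-y ^ 2)) (x : ℝ) :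
    HasDerivAt erf (2 / √π * exp (-x ^ 2)) x := by
  have hcont : Continuous fun y : ℝ => exp (-y ^ 2) := by fun_prop
  rw [funext herf]
  exact (intervalIntegral.integral_hasDerivAt_right (hcont.intervalIntegrable _ _)
    (hcont.stronglyMeasurableAtFilter _ _) hcont.continuousAt).const_mul _

theorem hasDerivAt_robin_of_erf_profile {F φ : ℝ → ℝ} {C s b β : ℝ}
    (hF : ∀ u, HasDerivAt F (C * exp (-u ^ 2)) u) (hF0 : F 0 = 0)
    (hφ : ∀ x, φ x = F (x / s) + exp (-β * x + b ^ 2) * (1 - F (x / s - b))) :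
    HasDerivAt φ (-β * φ 0) 0 := by
  have hlin : HasDerivAt (fun x : ℝ => x / s) (1 / s) 0 := (hasDerivAt_id 0).div_const s
  have hexp : HasDerivAt (fun x : ℝ => exp (-β * x + b ^ 2)) (exp (b ^ 2) * -β) 0 := by
    simpa using (((hasDerivAt_id (0 : ℝ)).const_mul (-β)).add_const (b ^ 2)).exp
  have hsum := ((hF (0 / s)).comp 0 hlin).add
    (hexp.mul (((hF (0 / s - b)).comp 0 (hlin.sub_const b)).const_sub 1))
  have hcancel : exp (b ^ 2) * exp (-b ^ 2) = 1 := by rw [← exp_add]; simp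
  rw [funext hφ]
  refine hsum.congr_deriv ?_
  norm_num [hF0]
  linear_combination (-(C * s⁻¹)) * hcancel

theorem psi_robin_boundary_general
    (σ : ℝ)
    (β : ℝ)
    (erf : ℝ → ℝ)
    (herf : ∀ x : ℝ, erf x = (2 / Real.sqrt Real.pi) * ∫ y in (0:ℝ)..x, Real.exp (-y ^ 2))
    (ψ : ℝ → ℝ → ℝ)
    (hψ : ∀ t x : ℝ, ψ t x =
      erf (x / (σ * Real.sqrt (2 * t))) +
        Real.exp (-β * x + β ^ 2 * σ ^ 2 * t / 2) *
          (1 - erf (x / (σ * Real.sqrt (2 * t)) - β * σ * Real.sqrt t / Real.sqrt 2))) :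
    ∀ t : ℝ, 0 < t → HasDerivAt (fun y => ψ t y) (-β * ψ t 0) 0 := by
  intro t ht
  have hshift : β ^ 2 * σ ^ 2 * t / 2 = (β * σ * √t / √2) ^ 2 := by
    rw [div_pow, mul_pow, sq_sqrt ht.le, sq_sqrt zero_le_two]
    ring
  exact hasDerivAt_robin_of_erf_profile (φ := ψ t) (s := σ * √(2 * t))
    (b := β * σ * √t / √2) (hasDerivAt_of_eq_integral_exp_neg_sq herf) (by simp [herf])
    fun x => by rw [hψ, hshift]

/-- For every t > 0, the x-derivative of ψ at the boundary point x = 0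
satisfies the Robin-type relation ∂_x ψ(t,0) = −β·ψ(t,0). -/
theorem psi_robin_boundary
    (σ γ κ c : ℝ) (hσ : 0 < σ) (hγ : 0 < γ) (hκ : 0 < κ)
    (β : ℝ) (hβ : β = γ ^ 2 / (2 * κ * σ ^ 2))
    (erf : ℝ → ℝ)
    (herf : ∀ x : ℝ, erf x = (2 / Real.sqrt Real.pi) * ∫ y in (0:ℝ)..x, Real.exp (-y ^ 2))
    (ψ : ℝ → ℝ → ℝ)
    (hψ : ∀ t x : ℝ, ψ t x =
      erf (x / (σ * Real.sqrt (2 * t))) +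
        Real.exp (-β * x + β ^ 2 * σ ^ 2 * t / 2) *
          (1 - erf (x / (σ * Real.sqrt (2 * t)) - β * σ * Real.sqrt t / Real.sqrt 2))) :
    ∀ t : ℝ, 0 < t → HasDerivAt (fun y => ψ t y) (-β * ψ t 0) 0 :=
  psi_robin_boundary_general σ β erf herf ψ hψ
end

section
/- The spatial gradient of the value function U is bounded: for every t > 0 and every z ≥ c one has −1 ≤ ∂_z U(t,z) ≤ 0, where ∂_z U(t,z) = ∂_x ψ(t, z−c)/(β·ψ(t, z−c)). In particular, z ↦ U(t,z) is nonincreasing and 1-Lipschitz on [c,∞) for each fixed t > 0. -/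
/-!
Write `d = σ√(2t)`, `a = βσ√t/√2` and `N(x) = exp(-βx + a²)(1 - erf(x/d - a))`, so that
`ψ(t,x) = erf(x/d) + N(x)`. Because `2a = βd`, the two Gaussian densities produced by
differentiating the error functions cancel and `∂ₓψ = -βN`. Since `erf < 1` everywhere and
`erf ≥ 0` on `[0,∞)`, we get `0 < N ≤ ψ` for `x ≥ 0`, hence `∂_z U = -N/ψ ∈ [-1, 0]`;
monotonicity and the Lipschitz bound then follow from the mean value theorem.
-/

open Real MeasureTheory intervalIntegral Set

theorem integral_exp_neg_sq_lt (x : ℝ) : ∫ y in (0 : ℝ)..x, exp (-y ^ 2) < √π / 2 := by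
  have hint : ∀ a : ℝ, IntegrableOn (fun y : ℝ => exp (-y ^ 2)) (Ioi a) := fun a => by
    simpa using (integrable_exp_neg_mul_sq one_pos).integrableOn
  have htail : 0 < ∫ y in Ioi x, exp (-y ^ 2) := by
    rw [setIntegral_pos_iff_support_of_nonneg_ae
      (Filter.Eventually.of_forall fun y => (exp_pos _).le) (hint x)]
    simp [Function.support, (exp_pos _).ne']
  have hhalf : ∫ y in Ioi (0 : ℝ), exp (-y ^ 2) = √π / 2 := by
    simpa using integral_gaussian_Ioi 1
  rw [← integral_Ioi_sub_Ioi' (hint 0) (hint x), hhalf]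
  linarith

noncomputable def errorFunction (x : ℝ) : ℝ := 2 / √π * ∫ y in (0 : ℝ)..x, exp (-y ^ 2)

theorem hasDerivAt_errorFunction (x : ℝ) :
    HasDerivAt errorFunction (2 / √π * exp (-x ^ 2)) x := by
  have hc : Continuous fun y : ℝ => exp (-y ^ 2) := by fun_prop
  exact (integral_hasDerivAt_right (hc.intervalIntegrable _ _)
    (hc.stronglyMeasurableAtFilter _ _) hc.continuousAt).const_mul _

theorem errorFunction_lt_one (x : ℝ) : errorFunction x < 1 := by
  have hπ : 0 < √π := sqrt_pos.mpr pi_pos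
  calc errorFunction x < 2 / √π * (√π / 2) :=
        mul_lt_mul_of_pos_left (integral_exp_neg_sq_lt x) (by positivity)
    _ = 1 := by field_simp

theorem errorFunction_nonneg {x : ℝ} (hx : 0 ≤ x) : 0 ≤ errorFunction x := by
  have := integral_nonneg (μ := volume) hx fun y _ => (exp_pos (-y ^ 2)).le
  unfold errorFunction
  positivity

theorem hasDerivAt_errorFunction_add_exp_mul_one_sub_errorFunction {β d a : ℝ} (hd : d ≠ 0)
    (hda : 2 * a = β * d) (x : ℝ) :
    HasDerivAt
      (fun x => errorFunction (x / d) + exp (-β * x + a ^ 2) * (1 - errorFunction (x / d - a)))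
      (-β * (exp (-β * x + a ^ 2) * (1 - errorFunction (x / d - a)))) x := by
  have hdiv : HasDerivAt (fun y : ℝ => y / d) (1 / d) x := by
    simpa using (hasDerivAt_id x).div_const d
  have hexp :
      HasDerivAt (fun y : ℝ => exp (-β * y + a ^ 2)) (exp (-β * x + a ^ 2) * -β) x := by
    simpa using (((hasDerivAt_id x).const_mul (-β)).add_const (a ^ 2)).exp
  have hsum := ((hasDerivAt_errorFunction (x / d)).comp x hdiv).add
    (hexp.mul (((hasDerivAt_errorFunction (x / d - a)).comp x (hdiv.sub_const a)).const_sub 1))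
  -- The two Gaussian densities produced by the chain rule cancel since `β = 2a/d`.
  have hgauss : exp (-β * x + a ^ 2) * exp (-(x / d - a) ^ 2) = exp (-(x / d) ^ 2) := by
    rw [← exp_add]
    congr 1
    field_simp
    linear_combination x * d * hda
  refine hsum.congr_deriv ?_
  simp only [Function.comp_apply]
  linear_combination -(2 / √π * (1 / d)) * hgauss

theorem hasDerivAt_one_div_mul_log_comp_sub {f : ℝ → ℝ} {β c g z : ℝ} (hβ : β ≠ 0)
    (hf : HasDerivAt f (-β * g) (z - c)) (hfz : f (z - c) ≠ 0) :
    HasDerivAt (fun w => 1 / β * log (f (w - c))) (-(g / f (z - c))) z := by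
  refine (((hf.comp z ((hasDerivAt_id z).sub_const c)).log hfz).const_mul (1 / β)).congr_deriv ?_
  simp only [Function.comp_apply, id]
  field_simp

theorem neg_div_mem_Icc_of_le {n p : ℝ} (hn : 0 ≤ n) (hnp : n ≤ p) :
    -(n / p) ∈ Icc (-1) 0 :=
  ⟨neg_le_neg (div_le_one_of_le₀ hnp (hn.trans hnp)),
    neg_nonpos.2 (div_nonneg hn (hn.trans hnp))⟩

theorem antitoneOn_and_lipschitzOnWith_one_of_hasDerivAt {f f' : ℝ → ℝ} {s : Set ℝ}
    (hs : Convex ℝ s) (hf : ∀ x ∈ s, HasDerivAt f (f' x) x)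
    (hf' : ∀ x ∈ s, f' x ∈ Icc (-1) 0) : AntitoneOn f s ∧ LipschitzOnWith 1 f s := by
  refine ⟨antitoneOn_of_hasDerivWithinAt_nonpos hs
      (fun x hx => (hf x hx).continuousAt.continuousWithinAt)
      (fun x hx => (hf x (interior_subset hx)).hasDerivWithinAt)
      (fun x hx => (hf' x (interior_subset hx)).2),
    hs.lipschitzOnWith_of_nnnorm_hasDerivWithin_le (fun x hx => (hf x hx).hasDerivWithinAt)
      (fun x hx => ?_)⟩
  rw [← NNReal.coe_le_coe, coe_nnnorm, norm_eq_abs, NNReal.coe_one, abs_le]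
  exact ⟨(hf' x hx).1, (hf' x hx).2.trans zero_le_one⟩

theorem two_mul_div_sqrt_two_eq (β σ t : ℝ) :
    2 * (β * σ * √t / √2) = β * (σ * √(2 * t)) := by
  rw [sqrt_mul zero_le_two]
  field_simp
  rw [sq_sqrt zero_le_two]
  ring

theorem div_sqrt_two_sq {β σ t : ℝ} (ht : 0 ≤ t) :
    (β * σ * √t / √2) ^ 2 = β ^ 2 * σ ^ 2 * t / 2 := by
  rw [div_pow, mul_pow, mul_pow, sq_sqrt ht, sq_sqrt zero_le_two]

/-- The spatial gradient of U is bounded: for every t > 0 and z ≥ c one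
has −1 ≤ ∂_z U(t,z) ≤ 0, where ∂_z U(t,z) = ∂_x ψ(t, z−c)/(β·ψ(t, z−c)).
In particular, z ↦ U(t,z) is nonincreasing and 1-Lipschitz on [c,∞) for each t > 0. -/
theorem U_gradient_bounded
    (σ γ κ c : ℝ) (hσ : 0 < σ) (hγ : 0 < γ) (hκ : 0 < κ)
    (β : ℝ) (hβ : β = γ ^ 2 / (2 * κ * σ ^ 2))
    (erf : ℝ → ℝ)
    (herf : ∀ x : ℝ, erf x = (2 / Real.sqrt Real.pi) * ∫ y in (0:ℝ)..x, Real.exp (-y ^ 2))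
    (ψ : ℝ → ℝ → ℝ)
    (hψ : ∀ t x : ℝ, ψ t x =
      erf (x / (σ * Real.sqrt (2 * t))) +
        Real.exp (-β * x + β ^ 2 * σ ^ 2 * t / 2) *
          (1 - erf (x / (σ * Real.sqrt (2 * t)) - β * σ * Real.sqrt t / Real.sqrt 2)))
    (U : ℝ → ℝ → ℝ)
    (hU : ∀ t z : ℝ, U t z = (1 / β) * Real.log (ψ t (z - c))) :
    ∀ t : ℝ, 0 < t →
      (∀ z : ℝ, c ≤ z →
        deriv (fun w => U t w) z = deriv (fun y => ψ t y) (z - c) / (β * ψ t (z - c)) ∧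
        -1 ≤ deriv (fun w => U t w) z ∧ deriv (fun w => U t w) z ≤ 0) ∧
      AntitoneOn (fun z => U t z) (Set.Ici c) ∧
      LipschitzOnWith 1 (fun z => U t z) (Set.Ici c) := by
  intro t ht
  obtain rfl : erf = errorFunction := funext herf
  have hβ0 : β ≠ 0 := by rw [hβ]; positivity
  set d := σ * √(2 * t)
  set a := β * σ * √t / √2
  have hd : 0 < d := by positivity
  set N : ℝ → ℝ := fun x => exp (-β * x + a ^ 2) * (1 - errorFunction (x / d - a))
  have hψN : ∀ x, ψ t x = errorFunction (x / d) + N x := fun x => by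
    rw [hψ, ← div_sqrt_two_sq ht.le]
  have hψ' : ∀ x, HasDerivAt (ψ t) (-β * N x) x := fun x => by
    rw [funext hψN]
    exact hasDerivAt_errorFunction_add_exp_mul_one_sub_errorFunction hd.ne'
      (two_mul_div_sqrt_two_eq β σ t) x
  have hN : ∀ x, 0 < N x := fun x => mul_pos (exp_pos _) (sub_pos.2 (errorFunction_lt_one _))
  have hNψ : ∀ z ∈ Ici c, N (z - c) ≤ ψ t (z - c) := fun z hz => by
    linarith [hψN (z - c), errorFunction_nonneg (div_nonneg (sub_nonneg.2 hz) hd.le)]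
  have hψ0 : ∀ z ∈ Ici c, ψ t (z - c) ≠ 0 := fun z hz => ((hN _).trans_le (hNψ z hz)).ne'
  have hU' : ∀ z ∈ Ici c, HasDerivAt (U t) (-(N (z - c) / ψ t (z - c))) z := fun z hz => by
    rw [funext (hU t)]
    exact hasDerivAt_one_div_mul_log_comp_sub hβ0 (hψ' _) (hψ0 z hz)
  have hbounds : ∀ z ∈ Ici c, -(N (z - c) / ψ t (z - c)) ∈ Icc (-1) 0 := fun z hz =>
    neg_div_mem_Icc_of_le (hN _).le (hNψ z hz)
  refine ⟨fun z hz => ?_,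
    antitoneOn_and_lipschitzOnWith_one_of_hasDerivAt (convex_Ici c) hU' hbounds⟩
  rw [(hU' z hz).deriv, (hψ' _).deriv]
  exact ⟨by field_simp [hψ0 z hz], hbounds z hz⟩
end

section
/- The optimal trading strategy v*(t,z) = (γ/(2κ))·∂_z U(T−t, z) of the speculative trader is a selling strategy with bounded rate: for every t ∈ [0,T) and every z ≥ c one has −γ/(2κ) ≤ v*(t,z) ≤ 0. -/
/-!
Write `s = σ√(2t)`, so that `ψ(t, x) = erf (x/s) + E(x) (1 - erf (x/s - βs/2))` with
`E(x) = exp (-βx + (βs/2)²)`. Completing the square gives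
`E(x) exp (-(x/s - βs/2)²) = exp (-(x/s)²)`, so the two Gaussian densities produced by
differentiating cancel and `∂ₓψ = -β E(x) (1 - erf (x/s - βs/2))`. Hence
`∂_z U = -E (1 - erf ⋯) / ψ`, and for `x ≥ 0` this ratio lies in `[0, 1]` because
`erf (x/s) ≥ 0` and `0 < 1 - erf`.
-/

open Real MeasureTheory

noncomputable section

namespace Real

def erf (x : ℝ) : ℝ := 2 / √π * ∫ y in (0 : ℝ)..x, exp (-y ^ 2)

theorem hasDerivAt_erf (x : ℝ) : HasDerivAt erf (2 / √π * exp (-x ^ 2)) x :=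
  ((by fun_prop : Continuous fun y : ℝ => exp (-y ^ 2)).integral_hasStrictDerivAt 0 x
    |>.hasDerivAt).const_mul _

@[simp]
theorem erf_zero : erf 0 = 0 := by simp [erf]

theorem strictMono_erf : StrictMono erf :=
  strictMono_of_hasDerivAt_pos hasDerivAt_erf fun x => by positivity

theorem erf_nonneg {x : ℝ} (hx : 0 ≤ x) : 0 ≤ erf x :=
  erf_zero ▸ strictMono_erf.monotone hx

theorem erf_le_one (x : ℝ) : erf x ≤ 1 := by
  rcases le_or_gt x 0 with hx | hx
  · linarith [erf_zero ▸ strictMono_erf.monotone hx]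
  have hIoc : ∫ y in (0 : ℝ)..x, exp (-y ^ 2) ≤ ∫ y in Set.Ioi (0 : ℝ), exp (-y ^ 2) := by
    rw [intervalIntegral.integral_of_le hx.le]
    refine setIntegral_mono_set ?_ (.of_forall fun y => (exp_pos _).le)
      Set.Ioc_subset_Ioi_self.eventuallyLE
    simpa using (integrable_exp_neg_mul_sq one_pos).integrableOn
  have hhalf : ∫ y in Set.Ioi (0 : ℝ), exp (-y ^ 2) = √π / 2 := by
    simpa using integral_gaussian_Ioi 1
  calc erf x ≤ 2 / √π * (√π / 2) := by
        rw [erf]; gcongr; exact hhalf ▸ hIoc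
    _ = 1 := by field_simp

theorem erf_lt_one (x : ℝ) : erf x < 1 :=
  (strictMono_erf (lt_add_one x)).trans_le (erf_le_one _)

end Real

section Psi

variable (β s : ℝ)

def psiTail (x : ℝ) : ℝ := exp (-β * x + (β * s / 2) ^ 2) * (1 - erf (x / s - β * s / 2))

def psi (x : ℝ) : ℝ := erf (x / s) + psiTail β s x

variable {β s}

theorem erf_add_exp_mul_eq_psi {σ τ : ℝ} (hτ : 0 ≤ τ) (x : ℝ) :
    erf (x / (σ * √(2 * τ))) + exp (-β * x + β ^ 2 * σ ^ 2 * τ / 2) *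
      (1 - erf (x / (σ * √(2 * τ)) - β * σ * √τ / √2)) =
      psi β (σ * √(2 * τ)) x := by
  have h2 : √2 ^ 2 = 2 := sq_sqrt zero_le_two
  have hhalf : β * (σ * √(2 * τ)) / 2 = β * σ * √τ / √2 := by
    rw [sqrt_mul zero_le_two]; field_simp; linear_combination β * σ * √τ * h2
  rw [psi, psiTail, hhalf, div_pow, mul_pow, mul_pow, sq_sqrt hτ, h2]

theorem exp_mul_exp_neg_sq_sub (hs : s ≠ 0) (x : ℝ) :
    exp (-β * x + (β * s / 2) ^ 2) * exp (-(x / s - β * s / 2) ^ 2) = exp (-(x / s) ^ 2) := by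
  rw [← exp_add]; congr 1; field_simp; ring

theorem hasDerivAt_psi (hs : s ≠ 0) (x : ℝ) :
    HasDerivAt (psi β s) (-β * psiTail β s x) x := by
  have hlin : HasDerivAt (fun x => x / s) (1 / s) x := by
    simpa using (hasDerivAt_id x).div_const s
  have hexp : HasDerivAt (fun x => exp (-β * x + (β * s / 2) ^ 2))
      (exp (-β * x + (β * s / 2) ^ 2) * -β) x := by
    simpa using (((hasDerivAt_id x).const_mul (-β)).add_const ((β * s / 2) ^ 2)).exp
  have h := ((hasDerivAt_erf _).comp x hlin).add
    (hexp.mul (((hasDerivAt_erf _).comp x (hlin.sub_const (β * s / 2))).const_sub 1))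
  refine h.congr_deriv ?_
  have hcancel := exp_mul_exp_neg_sq_sub (β := β) hs x
  simp only [psiTail, Function.comp_apply]
  linear_combination -(2 / √π * (1 / s)) * hcancel

theorem psiTail_pos (x : ℝ) : 0 < psiTail β s x :=
  mul_pos (exp_pos _) (sub_pos.mpr (erf_lt_one _))

theorem psi_pos (hs : 0 < s) {x : ℝ} (hx : 0 ≤ x) : 0 < psi β s x :=
  add_pos_of_nonneg_of_pos (erf_nonneg (div_nonneg hx hs.le)) (psiTail_pos x)

theorem hasDerivAt_log_psi (hβ : β ≠ 0) (hs : 0 < s) {x : ℝ} (hx : 0 ≤ x) :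
    HasDerivAt (fun x => 1 / β * log (psi β s x)) (-(psiTail β s x / psi β s x)) x := by
  refine (((hasDerivAt_psi hs.ne' x).log (psi_pos hs hx).ne').const_mul (1 / β)).congr_deriv ?_
  field_simp

theorem psiTail_div_psi_mem_Icc (hs : 0 < s) {x : ℝ} (hx : 0 ≤ x) :
    psiTail β s x / psi β s x ∈ Set.Icc 0 1 := by
  have hψ := psi_pos (β := β) hs hx
  refine ⟨div_nonneg (psiTail_pos x).le hψ.le, (div_le_one hψ).mpr ?_⟩
  exact le_add_of_nonneg_left (erf_nonneg (div_nonneg hx hs.le))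

end Psi

end

theorem optimal_strategy_bounds_general
    (σ γ κ c : ℝ) (hσ : 0 < σ) (hγ : 0 < γ) (hκ : 0 < κ)
    (β : ℝ) (hβ : β = γ ^ 2 / (2 * κ * σ ^ 2))
    (erf : ℝ → ℝ)
    (herf : ∀ x : ℝ, erf x = (2 / Real.sqrt Real.pi) * ∫ y in (0:ℝ)..x, Real.exp (-y ^ 2))
    (ψ : ℝ → ℝ → ℝ)
    (hψ : ∀ t x : ℝ, ψ t x =
      erf (x / (σ * Real.sqrt (2 * t))) +
        Real.exp (-β * x + β ^ 2 * σ ^ 2 * t / 2) *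
          (1 - erf (x / (σ * Real.sqrt (2 * t)) - β * σ * Real.sqrt t / Real.sqrt 2)))
    (U : ℝ → ℝ → ℝ)
    (hU : ∀ t z : ℝ, U t z = (1 / β) * Real.log (ψ t (z - c)))
    (T : ℝ)
    (v : ℝ → ℝ → ℝ)
    (hv : ∀ t z : ℝ, v t z = γ / (2 * κ) * deriv (fun w => U (T - t) w) z) :
    ∀ t : ℝ, 0 ≤ t → t < T → ∀ z : ℝ, c ≤ z →
      -(γ / (2 * κ)) ≤ v t z ∧ v t z ≤ 0 := by
  intro t _ htT z hz
  obtain rfl : erf = Real.erf := funext herf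
  have hβ0 : 0 < β := by rw [hβ]; positivity
  have hτ : 0 < T - t := sub_pos.mpr htT
  set s := σ * √(2 * (T - t))
  have hs : 0 < s := by positivity
  have hx : 0 ≤ z - c := sub_nonneg.mpr hz
  have hUψ : (fun w => U (T - t) w) = fun w => 1 / β * log (psi β s (w - c)) := by
    funext w; rw [hU, hψ, erf_add_exp_mul_eq_psi hτ.le]
  have hderiv : deriv (fun w => U (T - t) w) z = -(psiTail β s (z - c) / psi β s (z - c)) := by
    rw [hUψ, deriv_comp_sub_const (f := fun x => 1 / β * log (psi β s x))]
    exact (hasDerivAt_log_psi hβ0.ne' hs hx).deriv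
  obtain ⟨hr0, hr1⟩ := psiTail_div_psi_mem_Icc (β := β) hs hx
  have hrate : 0 < γ / (2 * κ) := by positivity
  rw [hv, hderiv]
  constructor <;> nlinarith

/-- The optimal trading strategy v*(t,z) = (γ/(2κ))·∂_z U(T−t, z) of
the speculative trader is a selling strategy with bounded rate: for every t ∈ [0,T)
and every z ≥ c one has −γ/(2κ) ≤ v*(t,z) ≤ 0. -/
theorem optimal_strategy_bounds
    (σ γ κ c : ℝ) (hσ : 0 < σ) (hγ : 0 < γ) (hκ : 0 < κ)
    (β : ℝ) (hβ : β = γ ^ 2 / (2 * κ * σ ^ 2))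
    (erf : ℝ → ℝ)
    (herf : ∀ x : ℝ, erf x = (2 / Real.sqrt Real.pi) * ∫ y in (0:ℝ)..x, Real.exp (-y ^ 2))
    (ψ : ℝ → ℝ → ℝ)
    (hψ : ∀ t x : ℝ, ψ t x =
      erf (x / (σ * Real.sqrt (2 * t))) +
        Real.exp (-β * x + β ^ 2 * σ ^ 2 * t / 2) *
          (1 - erf (x / (σ * Real.sqrt (2 * t)) - β * σ * Real.sqrt t / Real.sqrt 2)))
    (U : ℝ → ℝ → ℝ)
    (hU : ∀ t z : ℝ, U t z = (1 / β) * Real.log (ψ t (z - c)))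
    (T : ℝ) (hT : 0 < T)
    (v : ℝ → ℝ → ℝ)
    (hv : ∀ t z : ℝ, v t z = γ / (2 * κ) * deriv (fun w => U (T - t) w) z) :
    ∀ t : ℝ, 0 ≤ t → t < T → ∀ z : ℝ, c ≤ z →
      -(γ / (2 * κ)) ≤ v t z ∧ v t z ≤ 0 :=
  optimal_strategy_bounds_general σ γ κ c hσ hγ hκ β hβ erf herf ψ hψ U hU T v hv
end
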